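/- arXiv:1705.02289 — 3 statements merged into one kernel-verified Lean document; each statement's English description precedes it below -/
import Mathlib

section
/- Let u, v : ℝ × ℝ → ℝ be smooth and k ∈ ℝ. With Δ₁ = -v_t + u_xx - k·u·(u²+v²), Δ₂ = u_t + v_xx - k·v·(u²+v²) as in the NLS system, the scaling vector field X = u·∂_u + v·∂_v satisfies X(-v·Δ₁ + u·Δ₂) = 2·(-v·Δ₁ + u·Δ₂) identically, i.e., the first variation of the combination -v·Δ₁ + u·Δ₂ under the one-parameter family (u,v) ↦ (e^ε u, e^ε v), evaluated at ε = 0, equals 2·(-v·Δ₁ + u·Δ₂). Hence X is a sub-symmetry of the NLS system for the sub-system -v·Δ₁ + u·Δ₂ = 0. -/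
/-- Partial derivative of a function of n real variables in direction i. -/
noncomputable def pd {n : ℕ} (i : Fin n) (f : (Fin n → ℝ) → ℝ) (x : Fin n → ℝ) : ℝ :=
  fderiv ℝ f x (Pi.single i 1)

/-- The combination -v·Δ₁ + u·Δ₂ of the NLS equations (coordinates: 0 = x, 1 = t). -/
noncomputable def nlsComb (k : ℝ) (u v : (Fin 2 → ℝ) → ℝ) (x : Fin 2 → ℝ) : ℝ :=
  -(v x) * (-(pd 1 v x) + pd 0 (pd 0 u) x - k * u x * (u x ^ 2 + v x ^ 2))
  + u x * (pd 1 u x + pd 0 (pd 0 v) x - k * v x * (u x ^ 2 + v x ^ 2))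

lemma pd_const_mul {n : ℕ} (c : ℝ) (f : (Fin n → ℝ) → ℝ) (hf : Differentiable ℝ f)
    (i : Fin n) : pd i (fun y => c * f y) = fun x => c * pd i f x := by
  funext x
  simp [pd, fderiv_const_mul (hf x) c]

lemma pd_diff {n : ℕ} (f : (Fin n → ℝ) → ℝ) (hf : ContDiff ℝ (⊤ : ℕ∞) f) (i : Fin n) :
    Differentiable ℝ (pd i f) := by
  have : ContDiff ℝ (⊤ : ℕ∞) (fun x => fderiv ℝ f x (Pi.single i 1)) :=
    (hf.fderiv_right (ENat.coe_top_add_one).le).clm_apply contDiff_const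
  exact this.differentiable (by simp)

/-- The scaling vector field X = u∂_u + v∂_v is a sub-symmetry of the NLS system
for the sub-system -v·Δ₁ + u·Δ₂ = 0 :  its first variation of the combination
under (u,v) ↦ (e^ε u, e^ε v) at ε = 0 equals 2·(-v·Δ₁ + u·Δ₂). -/
theorem nls_scaling_subsymmetry (u v : (Fin 2 → ℝ) → ℝ) (k : ℝ)
    (hu : ContDiff ℝ (⊤ : ℕ∞) u) (hv : ContDiff ℝ (⊤ : ℕ∞) v) :
    ∀ x, deriv (fun ε : ℝ =>
        nlsComb k (fun y => Real.exp ε * u y) (fun y => Real.exp ε * v y) x) 0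
      = 2 * nlsComb k u v x := by
  intro x
  have hud := hu.differentiable (by simp)
  have hvd := hv.differentiable (by simp)
  have key : (fun ε : ℝ =>
        nlsComb k (fun y => Real.exp ε * u y) (fun y => Real.exp ε * v y) x)
      = fun ε => Real.exp (2 * ε) * nlsComb k u v x := by
    funext ε
    set c := Real.exp ε with hc
    have h2 : Real.exp (2 * ε) = c * c := by
      rw [two_mul, Real.exp_add]
    rw [h2]
    unfold nlsComb
    simp only [pd_const_mul c u hud, pd_const_mul c v hvd,
        pd_const_mul c (pd 0 u) (pd_diff u hu 0),
        pd_const_mul c (pd 0 v) (pd_diff v hv 0)]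
    ring
  rw [key]
  have h : HasDerivAt (fun ε : ℝ => Real.exp (2 * ε) * nlsComb k u v x)
      (2 * nlsComb k u v x) 0 := by
    have := (((hasDerivAt_id (0:ℝ)).const_mul 2).exp).mul_const (nlsComb k u v x)
    simpa using this
  exact h.deriv
end

section
/- Let u¹,u²,u³,p : ℝ⁴ → ℝ be smooth, a(r) = α + β×r with constant α,β ∈ ℝ³, and suppose: (Euler) uⁱ_t + Σⱼ uʲuⁱⱼ + pᵢ = 0 for i=1,2,3; (incompressibility) Σᵢ uⁱᵢ = 0; and (pressure constraint) Σᵢ aⁱpᵢ = 0. Then for every smooth f : ℝ → ℝ, setting v = Σᵢ aⁱuⁱ, the infinite conservation law D_t f(v) + Σⱼ Dⱼ(uʲ f(v)) = 0 holds pointwise. -/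
lemma pd_const {n} (i : Fin n) (c : ℝ) (x) : pd i (fun _ => c) x = 0 := by
  simp [pd]

lemma pd_coord {n} (i j : Fin n) (x) : pd i (fun y => y j) x = if j = i then 1 else 0 := by
  have : fderiv ℝ (fun y : Fin n → ℝ => y j) x = ContinuousLinearMap.proj j :=
    (ContinuousLinearMap.proj j : (Fin n → ℝ) →L[ℝ] ℝ).fderiv
  simp [pd, this, Pi.single_apply]

lemma pd_add {n} (i : Fin n) {f g : (Fin n → ℝ) → ℝ} {x}
    (hf : DifferentiableAt ℝ f x) (hg : DifferentiableAt ℝ g x) :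
    pd i (fun y => f y + g y) x = pd i f x + pd i g x := by
  simp [pd, fderiv_fun_add hf hg]

lemma pd_sub {n} (i : Fin n) {f g : (Fin n → ℝ) → ℝ} {x}
    (hf : DifferentiableAt ℝ f x) (hg : DifferentiableAt ℝ g x) :
    pd i (fun y => f y - g y) x = pd i f x - pd i g x := by
  simp [pd, fderiv_fun_sub hf hg]

lemma pd_mul {n} (i : Fin n) {f g : (Fin n → ℝ) → ℝ} {x}
    (hf : DifferentiableAt ℝ f x) (hg : DifferentiableAt ℝ g x) :
    pd i (fun y => f y * g y) x = f x * pd i g x + g x * pd i f x := by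
  simp [pd, fderiv_fun_mul hf hg]

lemma pd_comp {n} (i : Fin n) {f : ℝ → ℝ} {g : (Fin n → ℝ) → ℝ} {x}
    (hf : DifferentiableAt ℝ f (g x)) (hg : DifferentiableAt ℝ g x) :
    pd i (fun y => f (g y)) x = deriv f (g x) * pd i g x := by
  have h := fderiv_comp x hf hg
  have : (fun y => f (g y)) = f ∘ g := rfl
  rw [pd, this, h]
  simp only [ContinuousLinearMap.coe_comp', Function.comp_apply]
  have h2 : (fderiv ℝ g x) (Pi.single i 1) = pd i g x := rfl
  rw [h2]
  have : (fderiv ℝ f (g x)) (pd i g x) = pd i g x • (fderiv ℝ f (g x)) 1 := by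
    rw [← map_smul]; norm_num
  rw [this, fderiv_apply_one_eq_deriv, smul_eq_mul]; ring

/-- The spatial part of a space-time point (coordinate 0 is time). -/
def sp (x : Fin 4 → ℝ) : Fin 3 → ℝ := fun i => x i.succ

/-- Infinite conservation laws of the pressure-constrained Euler system:
for a(r) = α + β×r, v = Σᵢ aⁱuⁱ, and any smooth f,
D_t f(v) + Σⱼ Dⱼ(uʲ f(v)) = 0 on solutions.  Coordinates: 0 = t, 1,2,3 spatial. -/
theorem constrained_euler_infinite_conservation
    (u : Fin 3 → (Fin 4 → ℝ) → ℝ) (p : (Fin 4 → ℝ) → ℝ)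
    (hu : ∀ i, ContDiff ℝ (⊤ : ℕ∞) (u i)) (hp : ContDiff ℝ (⊤ : ℕ∞) p)
    (α β : Fin 3 → ℝ) (a : (Fin 3 → ℝ) → Fin 3 → ℝ)
    (ha : ∀ r, a r = α + crossProduct β r)
    (v : (Fin 4 → ℝ) → ℝ) (hv : ∀ x, v x = ∑ i, a (sp x) i * u i x)
    (heuler : ∀ (i : Fin 3) x,
      pd 0 (u i) x + (∑ j, u j x * pd j.succ (u i) x) + pd i.succ p x = 0)
    (hinc : ∀ x, ∑ i, pd i.succ (u i) x = 0)
    (hpress : ∀ x, ∑ i, a (sp x) i * pd i.succ p x = 0) :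
    ∀ f : ℝ → ℝ, ContDiff ℝ (⊤ : ℕ∞) f →
      ∀ x, pd 0 (fun y => f (v y)) x
        + ∑ j, pd j.succ (fun y => u j y * f (v y)) x = 0 := by
  intro f hf x
  have hud : ∀ i, Differentiable ℝ (u i) := fun i => (hu i).differentiable (by simp)
  have hfd : Differentiable ℝ f := hf.differentiable (by simp)
  have hs2 : ((2:Fin 3).succ : Fin 4) = 3 := rfl
  set W : (Fin 4 → ℝ) → ℝ := fun y =>
    (α 0 + (β 1 * y 3 - β 2 * y 2)) * u 0 y +
    ((α 1 + (β 2 * y 1 - β 0 * y 3)) * u 1 y +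
    (α 2 + (β 0 * y 2 - β 1 * y 1)) * u 2 y) with hW
  have hWd : Differentiable ℝ W := by rw [hW]; fun_prop
  have hvW : v = W := by
    funext y
    rw [hv y, hW]
    simp [ha, crossProduct, sp, Fin.sum_univ_three, Fin.succ_zero_eq_one,
      Fin.succ_one_eq_two, hs2]
    ring
  rw [hvW]
  have hcomp : ∀ k : Fin 4, pd k (fun y => f (W y)) x = deriv f (W x) * pd k W x :=
    fun k => pd_comp k (hfd _) (hWd _)
  have hmulk : ∀ (j : Fin 3) (k : Fin 4), pd k (fun y => u j y * f (W y)) x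
      = u j x * (deriv f (W x) * pd k W x) + f (W x) * pd k (u j) x := by
    intro j k
    rw [pd_mul k (hud j x) (by fun_prop), hcomp]
  simp only [Fin.sum_univ_three, Fin.succ_zero_eq_one, Fin.succ_one_eq_two, hs2,
    hcomp, hmulk]
  have hA : ∀ k : Fin 4, pd k W x =
      ((if (3:Fin 4) = k then (1:ℝ) else 0) * β 1 - (if (2:Fin 4) = k then 1 else 0) * β 2) * u 0 x
        + (α 0 + (β 1 * x 3 - β 2 * x 2)) * pd k (u 0) x
      + (((if (1:Fin 4) = k then (1:ℝ) else 0) * β 2 - (if (3:Fin 4) = k then 1 else 0) * β 0) * u 1 x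
        + (α 1 + (β 2 * x 1 - β 0 * x 3)) * pd k (u 1) x
      + (((if (2:Fin 4) = k then (1:ℝ) else 0) * β 0 - (if (1:Fin 4) = k then 1 else 0) * β 1) * u 2 x
        + (α 2 + (β 0 * x 2 - β 1 * x 1)) * pd k (u 2) x)) := by
    intro k
    rw [hW]
    simp (disch := fun_prop) only [pd_add, pd_sub, pd_mul, pd_const, pd_coord]
    ring
  have hpdW0 : pd 0 W x = (α 0 + (β 1 * x 3 - β 2 * x 2)) * pd 0 (u 0) x
      + (α 1 + (β 2 * x 1 - β 0 * x 3)) * pd 0 (u 1) x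
      + (α 2 + (β 0 * x 2 - β 1 * x 1)) * pd 0 (u 2) x := by
    rw [hA 0]; simp (config := { decide := true }); try ring
  have hpdW1 : pd 1 W x = β 2 * u 1 x - β 1 * u 2 x
      + (α 0 + (β 1 * x 3 - β 2 * x 2)) * pd 1 (u 0) x
      + (α 1 + (β 2 * x 1 - β 0 * x 3)) * pd 1 (u 1) x
      + (α 2 + (β 0 * x 2 - β 1 * x 1)) * pd 1 (u 2) x := by
    rw [hA 1]; simp (config := { decide := true }); try ring
  have hpdW2 : pd 2 W x = -(β 2 * u 0 x) + β 0 * u 2 x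
      + (α 0 + (β 1 * x 3 - β 2 * x 2)) * pd 2 (u 0) x
      + (α 1 + (β 2 * x 1 - β 0 * x 3)) * pd 2 (u 1) x
      + (α 2 + (β 0 * x 2 - β 1 * x 1)) * pd 2 (u 2) x := by
    rw [hA 2]; simp (config := { decide := true }); try ring
  have hpdW3 : pd 3 W x = β 1 * u 0 x - β 0 * u 1 x
      + (α 0 + (β 1 * x 3 - β 2 * x 2)) * pd 3 (u 0) x
      + (α 1 + (β 2 * x 1 - β 0 * x 3)) * pd 3 (u 1) x
      + (α 2 + (β 0 * x 2 - β 1 * x 1)) * pd 3 (u 2) x := by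
    rw [hA 3]; simp (config := { decide := true }); try ring
  have he0 := heuler 0 x
  have he1 := heuler 1 x
  have he2 := heuler 2 x
  have hi := hinc x
  have hpr := hpress x
  simp only [Fin.sum_univ_three, Fin.succ_zero_eq_one, Fin.succ_one_eq_two, hs2]
    at he0 he1 he2 hi hpr
  rw [ha] at hpr
  simp only [crossProduct, sp, Fin.sum_univ_three, Fin.succ_zero_eq_one,
    Fin.succ_one_eq_two, hs2, LinearMap.mk₂_apply, Pi.add_apply, Matrix.cons_val_zero,
    Matrix.cons_val_one, Matrix.head_cons, Matrix.cons_val_two, Matrix.tail_cons] at hpr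
  rw [hpdW0, hpdW1, hpdW2, hpdW3]
  linear_combination (deriv f (W x) * (α 0 + (β 1 * x 3 - β 2 * x 2))) * he0
    + (deriv f (W x) * (α 1 + (β 2 * x 1 - β 0 * x 3))) * he1
    + (deriv f (W x) * (α 2 + (β 0 * x 2 - β 1 * x 1))) * he2
    + f (W x) * hi - deriv f (W x) * hpr
end

section
/- (Total divergence form of the sub-symmetry–conservation correspondence.) Suppose the combination Ξ^vΔ_v of equations of a system equals a total divergence: Ξ^vΔ_v = Σᵢ Dᵢ M^i identically for smooth functions M^i of (x, u, Du, ...). If X is a prolonged evolutionary vector field with X(Ξ^vΔ_v) = Λ^vΔ_v for differential operators Λ^v, then the p-tuple M̃^i = X M^i satisfies Σᵢ Dᵢ M̃^i = Λ^vΔ_v, which vanishes whenever Δ = 0. (First-order concrete instance: if Σᵢ DᵢM^i = ΞΔ identically and X(ΞΔ) = ΛΔ, then Σᵢ Dᵢ(X M^i) = ΛΔ, using that prolonged evolutionary vector fields commute with total derivatives: X Dᵢ F = Dᵢ X F.) -/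
/-- The first-order jet space with p independent and q dependent variables. -/
abbrev Jet (p q : ℕ) := (Fin p → ℝ) × (Fin q → ℝ) × (Fin q → Fin p → ℝ)

/-- The first-order jet of a function u at x. -/
noncomputable def jet {p q : ℕ} (u : (Fin p → ℝ) → Fin q → ℝ) (x : Fin p → ℝ) :
    Jet p q :=
  (x, u x, fun a i => pd i (fun y => u y a) x)

/-- Partial derivative ∂F/∂u^a of a differential function on the jet space. -/
noncomputable def pdu {p q : ℕ} (F : Jet p q → ℝ) (a : Fin q) (z : Jet p q) : ℝ :=
  fderiv ℝ F z (0, Pi.single a 1, 0)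

/-- Partial derivative ∂F/∂u^a_i of a differential function on the jet space. -/
noncomputable def pdu1 {p q : ℕ} (F : Jet p q → ℝ) (a : Fin q) (i : Fin p)
    (z : Jet p q) : ℝ :=
  fderiv ℝ F z (0, 0, Pi.single a (Pi.single i 1))

/-- The Euler operator E_a(F) = ∂F/∂u^a − Σᵢ Dᵢ(∂F/∂u^a_i), evaluated along u. -/
noncomputable def eulerOp {p q : ℕ} (F : Jet p q → ℝ) (a : Fin q)
    (u : (Fin p → ℝ) → Fin q → ℝ) (x : Fin p → ℝ) : ℝ :=
  pdu F a (jet u x) - ∑ i, pd i (fun y => pdu1 F a i (jet u y)) x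

/-- The prolonged evolutionary vector field with characteristic α acting on F,
evaluated along u:  X_α F = Σ_a α^a ∂F/∂u^a + Σ_{a,i} (Dᵢα^a) ∂F/∂u^a_i. -/
noncomputable def evolAct {p q : ℕ} (α : Jet p q → Fin q → ℝ) (F : Jet p q → ℝ)
    (u : (Fin p → ℝ) → Fin q → ℝ) (x : Fin p → ℝ) : ℝ :=
  (∑ a, α (jet u x) a * pdu F a (jet u x))
  + ∑ a, ∑ i, pd i (fun y => α (jet u y) a) x * pdu1 F a i (jet u x)

/-- The Noether current components R^i(F) = Σ_a α^a ∂F/∂u^a_i along u. -/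
noncomputable def noetherR {p q : ℕ} (α : Jet p q → Fin q → ℝ) (F : Jet p q → ℝ)
    (u : (Fin p → ℝ) → Fin q → ℝ) (i : Fin p) (x : Fin p → ℝ) : ℝ :=
  ∑ a, α (jet u x) a * pdu1 F a i (jet u x)

/-! ### Auxiliary machinery: the deformation `u + t·α(jet u)` -/

open scoped ContDiff

lemma contDiff_pd {n : ℕ} (i : Fin n) {f : (Fin n → ℝ) → ℝ} (hf : ContDiff ℝ (⊤ : ℕ∞) f) :
    ContDiff ℝ (⊤ : ℕ∞) (pd i f) := by
  unfold pd
  exact (hf.fderiv_right (by simp)).clm_apply contDiff_const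

lemma contDiff_jet {p q : ℕ} {u : (Fin p → ℝ) → Fin q → ℝ} (hu : ContDiff ℝ (⊤ : ℕ∞) u) :
    ContDiff ℝ (⊤ : ℕ∞) (jet u) := by
  unfold jet
  refine contDiff_id.prodMk (hu.prodMk ?_)
  exact contDiff_pi.mpr fun a => contDiff_pi.mpr fun i =>
    contDiff_pd i (contDiff_pi.mp hu a)

lemma pd_add_smul {n : ℕ} (i : Fin n) {f g : (Fin n → ℝ) → ℝ} (t : ℝ) (x : Fin n → ℝ)
    (hf : DifferentiableAt ℝ f x) (hg : DifferentiableAt ℝ g x) :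
    pd i (fun z => f z + t * g z) x = pd i f x + t * pd i g x := by
  unfold pd
  rw [fderiv_fun_add hf (hg.const_mul t), fderiv_const_mul hg t]
  simp

/-- Characteristic evaluated along u. -/
noncomputable def Achar {p q : ℕ} (α : Jet p q → Fin q → ℝ) (u : (Fin p → ℝ) → Fin q → ℝ)
    (y : Fin p → ℝ) (a : Fin q) : ℝ := α (jet u y) a

/-- The deformed family `u + t·α(jet u)`. -/
noncomputable def wfam {p q : ℕ} (α : Jet p q → Fin q → ℝ) (u : (Fin p → ℝ) → Fin q → ℝ)
    (t : ℝ) (y : Fin p → ℝ) (a : Fin q) : ℝ := u y a + t * Achar α u y a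

/-- Explicit formula for the jet of the deformed family. -/
noncomputable def Kdef {p q : ℕ} (α : Jet p q → Fin q → ℝ) (u : (Fin p → ℝ) → Fin q → ℝ)
    (tz : ℝ × (Fin p → ℝ)) : Jet p q :=
  (tz.2, fun a => u tz.2 a + tz.1 * Achar α u tz.2 a,
    fun a i => pd i (fun z => u z a) tz.2 + tz.1 * pd i (fun z => Achar α u z a) tz.2)

section Deform

variable {p q : ℕ} {α : Jet p q → Fin q → ℝ} {u : (Fin p → ℝ) → Fin q → ℝ}

lemma contDiff_Achar (hu : ContDiff ℝ (⊤ : ℕ∞) u) (hα : ContDiff ℝ (⊤ : ℕ∞) α) :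
    ContDiff ℝ (⊤ : ℕ∞) (Achar α u) := hα.comp (contDiff_jet hu)

lemma contDiff_wfam (hu : ContDiff ℝ (⊤ : ℕ∞) u) (hα : ContDiff ℝ (⊤ : ℕ∞) α) (t : ℝ) :
    ContDiff ℝ (⊤ : ℕ∞) (wfam α u t) := by
  refine contDiff_pi.mpr fun a => ?_
  exact (contDiff_pi.mp hu a).add
    (contDiff_const.mul (contDiff_pi.mp (contDiff_Achar hu hα) a))

lemma jet_wfam (hu : ContDiff ℝ (⊤ : ℕ∞) u) (hα : ContDiff ℝ (⊤ : ℕ∞) α) (t : ℝ) (y : Fin p → ℝ) :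
    jet (wfam α u t) y = Kdef α u (t, y) := by
  unfold jet wfam Kdef
  refine Prod.ext rfl (Prod.ext rfl ?_)
  funext a i
  exact pd_add_smul i t y ((contDiff_pi.mp hu a).differentiable (by simp) y)
    ((contDiff_pi.mp (contDiff_Achar hu hα) a).differentiable (by simp) y)

lemma contDiff_Kdef (hu : ContDiff ℝ (⊤ : ℕ∞) u) (hα : ContDiff ℝ (⊤ : ℕ∞) α) :
    ContDiff ℝ (⊤ : ℕ∞) (Kdef α u) := by
  unfold Kdef
  refine contDiff_snd.prodMk (ContDiff.prodMk ?_ ?_)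
  · refine contDiff_pi.mpr fun a => ?_
    exact ((contDiff_pi.mp hu a).comp contDiff_snd).add
      (contDiff_fst.mul ((contDiff_pi.mp (contDiff_Achar hu hα) a).comp contDiff_snd))
  · refine contDiff_pi.mpr fun a => contDiff_pi.mpr fun i => ?_
    exact ((contDiff_pd i (contDiff_pi.mp hu a)).comp contDiff_snd).add
      (contDiff_fst.mul
        ((contDiff_pd i (contDiff_pi.mp (contDiff_Achar hu hα) a)).comp contDiff_snd))

/-- The evolutionary action is the t-derivative of F along the deformation. -/
lemma evol_hasDerivAt {F : Jet p q → ℝ} (hF : ContDiff ℝ (⊤ : ℕ∞) F) (x : Fin p → ℝ) :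
    HasDerivAt (fun t => F (Kdef α u (t, x))) (evolAct α F u x) 0 := by
  set z₀ : Jet p q := jet u x with hz₀
  set v : Jet p q := ((0 : Fin p → ℝ), Achar α u x,
      fun a i => pd i (fun z => Achar α u z a) x) with hv
  have hKline : ∀ t : ℝ, Kdef α u (t, x) = z₀ + t • v := by
    intro t
    refine Prod.ext ?_ (Prod.ext ?_ ?_)
    · simp [Kdef, hz₀, hv, jet]
    · funext a; simp [Kdef, hz₀, hv, jet]
    · funext a i; simp [Kdef, hz₀, hv, jet]
  have h1 : HasDerivAt (fun t : ℝ => z₀ + t • v) v 0 := by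
    clear hKline
    clear_value z₀ v
    simpa using ((hasDerivAt_id (0 : ℝ)).smul_const v).const_add z₀
  have h2 : HasDerivAt (fun t : ℝ => F (z₀ + t • v)) (fderiv ℝ F z₀ v) 0 := by
    have hF' : HasFDerivAt F (fderiv ℝ F z₀) (z₀ + (0 : ℝ) • v) := by
      simpa using ((hF.differentiable (by simp)) z₀).hasFDerivAt
    exact hF'.comp_hasDerivAt 0 h1
  have hval : fderiv ℝ F z₀ v = evolAct α F u x := by
    have hvdecomp : v = (∑ a, Achar α u x a •
          (((0 : Fin p → ℝ), Pi.single a 1, (0 : Fin q → Fin p → ℝ)) : Jet p q))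
        + ∑ a, ∑ i, (pd i (fun z => Achar α u z a) x) •
          (((0 : Fin p → ℝ), (0 : Fin q → ℝ), Pi.single a (Pi.single i 1)) : Jet p q) := by
      refine Prod.ext ?_ (Prod.ext ?_ ?_)
      · simp [hv, Prod.fst_sum]
      · funext b
        simp [hv, Prod.snd_sum, Prod.fst_sum, Finset.sum_apply, Pi.single_apply]
      · funext b j
        simp [hv, Prod.snd_sum, Finset.sum_apply, Pi.single_apply, Finset.sum_ite_eq',
          mul_ite]
    rw [hvdecomp]
    simp only [map_add, map_sum, map_smul, smul_eq_mul]
    rfl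
  rw [← hval]
  have : (fun t : ℝ => F (Kdef α u (t, x))) = fun t : ℝ => F (z₀ + t • v) := by
    funext t; rw [hKline t]
  rw [this]
  exact h2

/-- Clairaut-type commutation: the t-derivative of a total derivative equals the
total derivative of the t-derivative. -/
lemma clairaut_pd {H : ℝ × (Fin p → ℝ) → ℝ} (hHs : ContDiff ℝ (⊤ : ℕ∞) H) (i : Fin p)
    (x : Fin p → ℝ) (E : (Fin p → ℝ) → ℝ) (hE : ∀ y, E y = fderiv ℝ H (0, y) (1, 0)) :
    HasDerivAt (fun t => pd i (fun y => H (t, y)) x) (pd i E x) 0 := by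
  set g := fderiv ℝ H with hg
  have hgs : ContDiff ℝ (⊤ : ℕ∞) g := hHs.fderiv_right (by simp)
  set L : (Fin p → ℝ) →L[ℝ] ℝ × (Fin p → ℝ) :=
    ((0 : (Fin p → ℝ) →L[ℝ] ℝ).prod (ContinuousLinearMap.id ℝ _)) with hL
  have hline : ∀ (t : ℝ) (y : Fin p → ℝ),
      HasFDerivAt (fun z : Fin p → ℝ => ((t, z) : ℝ × (Fin p → ℝ))) L y :=
    fun t y => (hasFDerivAt_const t y).prodMk (hasFDerivAt_id y)
  have step1 : ∀ t : ℝ, pd i (fun y => H (t, y)) x = g (t, x) (0, Pi.single i 1) := by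
    intro t
    have hcomp : HasFDerivAt (fun y => H (t, y)) ((g (t, x)).comp L) x :=
      ((hHs.differentiable (by simp)) (t, x)).hasFDerivAt.comp x (hline t x)
    rw [pd, hcomp.fderiv]
    simp [hL]
  have hsnd : HasDerivAt (fun t : ℝ => g (t, x)) (fderiv ℝ g (0, x) (1, 0)) 0 := by
    have hvert : HasDerivAt (fun t : ℝ => ((t, x) : ℝ × (Fin p → ℝ))) (1, 0) 0 :=
      (hasDerivAt_id 0).prodMk (hasDerivAt_const 0 x)
    exact
      (((hgs.differentiable (by simp)) (0, x)).hasFDerivAt).comp_hasDerivAt 0 hvert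
  have hLd : HasDerivAt (fun t : ℝ => g (t, x) ((0, Pi.single i 1) : ℝ × (Fin p → ℝ)))
      (fderiv ℝ g (0, x) (1, 0) (0, Pi.single i 1)) 0 := by
    simpa using hsnd.clm_apply (hasDerivAt_const (0:ℝ) ((0, Pi.single i 1) : ℝ × (Fin p → ℝ)))
  have hRHS : pd i E x = fderiv ℝ g (0, x) (0, Pi.single i 1) (1, 0) := by
    have hEfun : E = fun y => g (0, y) ((1, 0) : ℝ × (Fin p → ℝ)) := funext fun y => hE y
    have hcomp2 : HasFDerivAt (fun y => g (0, y)) ((fderiv ℝ g (0, x)).comp L) x :=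
      ((hgs.differentiable (by simp)) (0, x)).hasFDerivAt.comp x (hline 0 x)
    have happ : HasFDerivAt (fun y => g (0, y) ((1, 0) : ℝ × (Fin p → ℝ)))
        ((g (0, x)).comp (0 : (Fin p → ℝ) →L[ℝ] ℝ × (Fin p → ℝ))
          + ((fderiv ℝ g (0, x)).comp L).flip ((1, 0) : ℝ × (Fin p → ℝ))) x :=
      hcomp2.clm_apply (hasFDerivAt_const _ x)
    rw [hEfun, pd, happ.fderiv]
    simp [hL]
  have hsymm := (hHs.contDiffAt (x := ((0 : ℝ), x))).isSymmSndFDerivAt (by rw [minSmoothness_of_isRCLikeNormedField]; exact WithTop.coe_le_coe.mpr le_top)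
    ((1, 0) : ℝ × (Fin p → ℝ)) ((0, Pi.single i 1) : ℝ × (Fin p → ℝ))
  have hfin : pd i E x = fderiv ℝ g (0, x) (1, 0) (0, Pi.single i 1) := by
    rw [hRHS, hg, ← hsymm]
  rw [hfin, funext step1]
  exact hLd

/-- The evolutionary action as a vertical fderiv of the composed map. -/
lemma evol_eq_fderiv (hu : ContDiff ℝ (⊤ : ℕ∞) u) (hα : ContDiff ℝ (⊤ : ℕ∞) α)
    {F : Jet p q → ℝ} (hF : ContDiff ℝ (⊤ : ℕ∞) F) (y : Fin p → ℝ) :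
    evolAct α F u y
      = fderiv ℝ (fun tz : ℝ × (Fin p → ℝ) => F (Kdef α u tz)) (0, y) (1, 0) := by
  have hHs : ContDiff ℝ (⊤ : ℕ∞) (fun tz : ℝ × (Fin p → ℝ) => F (Kdef α u tz)) :=
    hF.comp (contDiff_Kdef hu hα)
  have hvert : HasDerivAt (fun t : ℝ => ((t, y) : ℝ × (Fin p → ℝ))) (1, 0) 0 :=
    (hasDerivAt_id 0).prodMk (hasDerivAt_const 0 y)
  have h2 : HasDerivAt (fun t : ℝ => F (Kdef α u (t, y)))
      (fderiv ℝ (fun tz : ℝ × (Fin p → ℝ) => F (Kdef α u tz)) (0, y) (1, 0)) 0 := by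
    exact
      (((hHs.differentiable (by simp)) (0, y)).hasFDerivAt).comp_hasDerivAt 0 hvert
  exact (evol_hasDerivAt hF y).unique h2

end Deform

/-- Total divergence form of the sub-symmetry–conservation correspondence
(first-order concrete instance):  if Σᵢ DᵢM^i = ΞΔ identically and
X_α(ΞΔ) = Λ·Δ, then Σᵢ Dᵢ(X_α M^i) = Λ·Δ, which vanishes whenever Δ = 0. -/
theorem subsymmetry_total_divergence (p q : ℕ)
    (Δ Ξ Λ : Jet p q → ℝ)
    (hΔ : ContDiff ℝ (⊤ : ℕ∞) Δ) (hΞ : ContDiff ℝ (⊤ : ℕ∞) Ξ) (hΛ : ContDiff ℝ (⊤ : ℕ∞) Λ)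
    (M : Fin p → Jet p q → ℝ) (hM : ∀ i, ContDiff ℝ (⊤ : ℕ∞) (M i))
    (α : Jet p q → Fin q → ℝ) (hα : ContDiff ℝ (⊤ : ℕ∞) α)
    (hDiv : ∀ (u : (Fin p → ℝ) → Fin q → ℝ), ContDiff ℝ (⊤ : ℕ∞) u → ∀ x,
      ∑ i, pd i (fun y => M i (jet u y)) x = Ξ (jet u x) * Δ (jet u x))
    (hSub : ∀ (u : (Fin p → ℝ) → Fin q → ℝ), ContDiff ℝ (⊤ : ℕ∞) u → ∀ x,
      evolAct α (fun z => Ξ z * Δ z) u x = Λ (jet u x) * Δ (jet u x)) :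
    ∀ (u : (Fin p → ℝ) → Fin q → ℝ), ContDiff ℝ (⊤ : ℕ∞) u →
      (∀ x, ∑ i, pd i (fun y => evolAct α (M i) u y) x
          = Λ (jet u x) * Δ (jet u x))
      ∧ (∀ x, Δ (jet u x) = 0 →
          ∑ i, pd i (fun y => evolAct α (M i) u y) x = 0) := by
  intro u hu
  have key : ∀ x, ∑ i, pd i (fun y => evolAct α (M i) u y) x
      = Λ (jet u x) * Δ (jet u x) := by
    intro x
    -- commutation: for each i, derivative of Dᵢ Mᵢ along deformation is Dᵢ (X Mᵢ)
    have hswap : ∀ i : Fin p,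
        HasDerivAt (fun t => pd i (fun y => M i (Kdef α u (t, y))) x)
          (pd i (fun y => evolAct α (M i) u y) x) 0 := by
      intro i
      exact clairaut_pd ((hM i).comp (contDiff_Kdef hu hα)) i x _
        (fun y => evol_eq_fderiv hu hα (hM i) y)
    have hsum : HasDerivAt
        (fun t => ∑ i, pd i (fun y => M i (Kdef α u (t, y))) x)
        (∑ i, pd i (fun y => evolAct α (M i) u y) x) 0 :=
      HasDerivAt.fun_sum (fun i _ => hswap i)
    -- the summed function equals t ↦ (ΞΔ)(K(t,x)) by the divergence identity
    have hfun : (fun t => ∑ i, pd i (fun y => M i (Kdef α u (t, y))) x)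
        = fun t => Ξ (Kdef α u (t, x)) * Δ (Kdef α u (t, x)) := by
      funext t
      have hd := hDiv (wfam α u t) (contDiff_wfam hu hα t) x
      calc ∑ i, pd i (fun y => M i (Kdef α u (t, y))) x
          = ∑ i, pd i (fun y => M i (jet (wfam α u t) y)) x :=
            Finset.sum_congr rfl fun i _ => by
              rw [show (fun y => M i (Kdef α u (t, y)))
                  = fun y => M i (jet (wfam α u t) y) from
                funext fun y => by rw [jet_wfam hu hα t y]]
        _ = Ξ (jet (wfam α u t) x) * Δ (jet (wfam α u t) x) := hd
        _ = Ξ (Kdef α u (t, x)) * Δ (Kdef α u (t, x)) := by rw [jet_wfam hu hα t x]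
    rw [hfun] at hsum
    have hXΞΔ : HasDerivAt (fun t => Ξ (Kdef α u (t, x)) * Δ (Kdef α u (t, x)))
        (evolAct α (fun z => Ξ z * Δ z) u x) 0 :=
      evol_hasDerivAt (hΞ.mul hΔ) x
    have := hsum.unique hXΞΔ
    rw [this, hSub u hu x]
  exact ⟨key, fun x h0 => by rw [key x, h0, mul_zero]⟩
end
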